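/- Let Q be a commutative nontrivial ZDF involutive quantale, X a set, A a commutative von Neumann unital *-subsemialgebra of Hom(X,X), and e a primitive subunital idempotent of A. Then the complement {f ∈ A | f∘e = 0} of the indecomposable component e∘A is a prime k*-ideal of A. -/
import Mathlib


open Classical

noncomputable section

universe u v

/-- A commutative involutive quantale: a complete lattice with a commutative
monoid operation distributing over arbitrary joins, together with a
join-preserving involution compatible with multiplication and unit. -/
structure CommInvQuantale (Q : Type u) [CompleteLattice Q] : Type u where
  mul : Q → Q → Q
  one : Q
  mul_comm : ∀ a b : Q, mul a b = mul b a
  mul_assoc : ∀ a b c : Q, mul (mul a b) c = mul a (mul b c)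
  one_mul : ∀ a : Q, mul one a = a
  mul_sSup : ∀ (a : Q) (S : Set Q), mul a (sSup S) = ⨆ y ∈ S, mul a y
  inv : Q → Q
  inv_inv : ∀ a : Q, inv (inv a) = a
  inv_sSup : ∀ S : Set Q, inv (sSup S) = ⨆ y ∈ S, inv y
  inv_mul : ∀ a b : Q, inv (mul a b) = mul (inv a) (inv b)
  inv_one : inv one = one

namespace CommInvQuantale

variable {Q : Type u} [CompleteLattice Q] {X : Type v}

/-- Zero-divisor free: `x·y = 0` implies `x = 0` or `y = 0` (where `0 = ⊥`). -/
def ZDF (Qd : CommInvQuantale Q) : Prop :=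
  ∀ a b : Q, Qd.mul a b = ⊥ → a = ⊥ ∨ b = ⊥

/-- Nontrivial: `1 ≠ 0`. -/
def NontrivialQ (Qd : CommInvQuantale Q) : Prop := Qd.one ≠ (⊥ : Q)

/-- The zero `Q`-relation. -/
def qzero : X → X → Q := fun _ _ => (⊥ : Q)

/-- The support of a `Q`-relation. -/
def supp (f : X → X → Q) : Set X := {x | ∃ y, f x y ≠ (⊥ : Q)}

/-- The cosupport of a `Q`-relation. -/
def cosupp (f : X → X → Q) : Set X := {x | ∃ y, f y x ≠ (⊥ : Q)}

/-- The kernel of a character of `A`. -/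
def kerChar (A : Set (X → X → Q)) (ρ : (X → X → Q) → Q) : Set (X → X → Q) :=
  {f ∈ A | ρ f = (⊥ : Q)}

/-- The map `w : Q → 2` sending `0` to `0` and every nonzero element to `1`
(with `2` modelled by `Bool`). -/
def wmap : Q → Bool := fun q => if q = (⊥ : Q) then false else true

/-- The kernel of a homomorphism `γ : A → 2` (with `2` modelled by `Bool`). -/
def kerTwo (A : Set (X → X → Q)) (γ : (X → X → Q) → Bool) : Set (X → X → Q) :=
  {f ∈ A | γ f = false}

variable (Qd : CommInvQuantale Q)

/-- Composition of `Q`-relations: `(f ∘ g)(x,z) = ⋁_y g(x,y) · f(y,z)`,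
so `qcomp Qd f g` is "`f` after `g`". -/
def qcomp (f g : X → X → Q) : X → X → Q := fun x z => ⨆ y : X, Qd.mul (g x y) (f y z)

/-- The identity `Q`-relation. -/
def qid : X → X → Q := fun x y => if x = y then Qd.one else ⊥

/-- The dagger of a `Q`-relation: `f†(x,y) = f(y,x)*`. -/
def qdag (f : X → X → Q) : X → X → Q := fun x y => Qd.inv (f y x)

/-- Scalar multiplication of a `Q`-relation: `(q•f)(x,y) = q·f(x,y)`. -/
def qsmul (q : Q) (f : X → X → Q) : X → X → Q := fun x y => Qd.mul q (f x y)

/-- A commutative unital *-subsemialgebra of `Hom(X,X)`: contains the zero and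
identity relations, closed under pointwise binary join, composition, scalar
multiplication and dagger, and composition is commutative on it. -/
structure IsSubalg (A : Set (X → X → Q)) : Prop where
  zero_mem : qzero ∈ A
  id_mem : Qd.qid ∈ A
  sup_mem : ∀ f ∈ A, ∀ g ∈ A, f ⊔ g ∈ A
  comp_mem : ∀ f ∈ A, ∀ g ∈ A, Qd.qcomp f g ∈ A
  smul_mem : ∀ (q : Q), ∀ f ∈ A, Qd.qsmul q f ∈ A
  dag_mem : ∀ f ∈ A, Qd.qdag f ∈ A
  comp_comm : ∀ f ∈ A, ∀ g ∈ A, Qd.qcomp f g = Qd.qcomp g f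

/-- The commutant of a set of `Q`-relations. -/
def commutant (B : Set (X → X → Q)) : Set (X → X → Q) :=
  { f | ∀ g ∈ B, Qd.qcomp f g = Qd.qcomp g f }

/-- A commutative von Neumann unital *-subsemialgebra: a commutative unital
*-subsemialgebra equal to its double commutant. -/
def IsVN (A : Set (X → X → Q)) : Prop :=
  Qd.IsSubalg A ∧ Qd.commutant (Qd.commutant A) = A

/-- A character of `A`: a map `ρ : Hom(X,X) → Q` with `ρ(0) = 0`, `ρ(id) = 1`,
preserving binary joins, composition and dagger on `A`. -/
structure IsChar (A : Set (X → X → Q)) (ρ : (X → X → Q) → Q) : Prop where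
  map_zero : ρ qzero = (⊥ : Q)
  map_id : ρ Qd.qid = Qd.one
  map_sup : ∀ f ∈ A, ∀ g ∈ A, ρ (f ⊔ g) = ρ f ⊔ ρ g
  map_comp : ∀ f ∈ A, ∀ g ∈ A, ρ (Qd.qcomp f g) = Qd.mul (ρ f) (ρ g)
  map_dag : ∀ f ∈ A, ρ (Qd.qdag f) = Qd.inv (ρ f)

/-- An ideal of `A`. -/
structure IsIdeal (A J : Set (X → X → Q)) : Prop where
  subset : J ⊆ A
  zero_mem : qzero ∈ J
  sup_mem : ∀ a ∈ J, ∀ b ∈ J, a ⊔ b ∈ J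
  absorb : ∀ f ∈ A, ∀ a ∈ J, Qd.qcomp f a ∈ J

/-- A prime k*-ideal of `A`: a proper prime ideal which is a k-ideal closed
under dagger. -/
structure IsPrimeKStarIdeal (A J : Set (X → X → Q)) : Prop where
  ideal : Qd.IsIdeal A J
  proper : J ≠ A
  prime : ∀ f ∈ A, ∀ g ∈ A, Qd.qcomp f g ∈ J → f ∈ J ∨ g ∈ J
  kideal : ∀ a ∈ J, ∀ b ∈ A, a ⊔ b ∈ J → b ∈ J
  dag_mem : ∀ a ∈ J, Qd.qdag a ∈ J

/-- A global section of the Gelfand spectrum over `X`: an assignment of a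
character to every commutative von Neumann unital *-subsemialgebra of
`Hom(X,X)`, compatible with restriction along inclusions. -/
def IsGelfandGlobalSection (ρ : Set (X → X → Q) → (X → X → Q) → Q) : Prop :=
  (∀ A : Set (X → X → Q), Qd.IsVN A → Qd.IsChar A (ρ A)) ∧
  (∀ A B : Set (X → X → Q), Qd.IsVN A → Qd.IsVN B → A ⊆ B → ∀ f ∈ A, ρ A f = ρ B f)

/-- A global section of the prime spectrum over `X`: an assignment of a prime
k*-ideal to every commutative von Neumann unital *-subsemialgebra of
`Hom(X,X)`, compatible with restriction along inclusions. -/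
def IsPrimeGlobalSection (χ : Set (X → X → Q) → Set (X → X → Q)) : Prop :=
  (∀ A : Set (X → X → Q), Qd.IsVN A → Qd.IsPrimeKStarIdeal A (χ A)) ∧
  (∀ A B : Set (X → X → Q), Qd.IsVN A → Qd.IsVN B → A ⊆ B → χ A = A ∩ χ B)

/-- An idempotent element of `A`. -/
def IsIdem (A : Set (X → X → Q)) (p : X → X → Q) : Prop :=
  p ∈ A ∧ Qd.qcomp p p = p

/-- A subunital idempotent of `A`: an idempotent with an orthogonal idempotent
complement summing to the identity. -/
def IsSubunital (A : Set (X → X → Q)) (p : X → X → Q) : Prop :=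
  Qd.IsIdem A p ∧ ∃ q, Qd.IsIdem A q ∧ Qd.qcomp p q = qzero ∧ p ⊔ q = Qd.qid

/-- A primitive subunital idempotent of `A`. -/
def IsPrimitive (A : Set (X → X → Q)) (p : X → X → Q) : Prop :=
  Qd.IsSubunital A p ∧ p ≠ qzero ∧
    ¬ ∃ s t, Qd.IsSubunital A s ∧ s ≠ qzero ∧ Qd.IsSubunital A t ∧ t ≠ qzero ∧
      Qd.qcomp s t = qzero ∧ s ⊔ t = p

/-- The unique quantale map `! : 2 → Q` (with `2` modelled by `Bool`). -/
def bang : Bool → Q := fun b => if b then Qd.one else ⊥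

/-- A homomorphism `γ : A → 2` (with `2` the two-element quantale, modelled by
`Bool` with join `||` and multiplication `&&`, trivial involution). -/
structure IsTwoHom (A : Set (X → X → Q)) (γ : (X → X → Q) → Bool) : Prop where
  map_zero : γ qzero = false
  map_id : γ Qd.qid = true
  map_sup : ∀ f ∈ A, ∀ g ∈ A, γ (f ⊔ g) = (γ f || γ g)
  map_comp : ∀ f ∈ A, ∀ g ∈ A, γ (Qd.qcomp f g) = (γ f && γ g)
  map_dag : ∀ f ∈ A, γ (Qd.qdag f) = γ f

/-- The Gelfand spectrum of `A`: the set of characters of `A`. -/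
def SpecG (A : Set (X → X → Q)) : Type (max u v) :=
  {ρ : (X → X → Q) → Q // Qd.IsChar A ρ}

/-- The prime spectrum of `A`: the set of prime k*-ideals of `A`. -/
def SpecP (A : Set (X → X → Q)) : Type (max u v) :=
  {J : Set (X → X → Q) // Qd.IsPrimeKStarIdeal A J}

/-- The Zariski topology on the Gelfand spectrum, with basic closed sets
`V_G(J) = {ρ | J ⊆ ker ρ}` for ideals `J` of `A`. -/
def zariskiG (A : Set (X → X → Q)) : TopologicalSpace (Qd.SpecG A) :=
  TopologicalSpace.generateFrom
    {U | ∃ J : Set (X → X → Q), Qd.IsIdeal A J ∧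
      U = {ρ : Qd.SpecG A | J ⊆ kerChar A ρ.1}ᶜ}

/-- The Zariski topology on the prime spectrum, with basic closed sets
`V_P(J) = {K | J ⊆ K}` for ideals `J` of `A`. -/
def zariskiP (A : Set (X → X → Q)) : TopologicalSpace (Qd.SpecP A) :=
  TopologicalSpace.generateFrom
    {U | ∃ J : Set (X → X → Q), Qd.IsIdeal A J ∧
      U = {K : Qd.SpecP A | J ⊆ K.1}ᶜ}

/- ### Auxiliary lemmas -/

lemma mul_bot' (a : Q) : Qd.mul a ⊥ = ⊥ := by
  have h := Qd.mul_sSup a ∅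
  simpa using h

lemma bot_mul' (a : Q) : Qd.mul ⊥ a = ⊥ := by
  rw [Qd.mul_comm]; exact Qd.mul_bot' a

lemma inv_bot' : Qd.inv (⊥ : Q) = ⊥ := by
  simpa using Qd.inv_sSup ∅

lemma inv_eq_bot {a : Q} : Qd.inv a = ⊥ ↔ a = ⊥ := by
  constructor
  · intro h
    have h2 := Qd.inv_inv a
    rw [← h2, h, Qd.inv_bot']
  · rintro rfl; exact Qd.inv_bot'

lemma inv_iSup {ι : Sort*} (F : ι → Q) : Qd.inv (⨆ i, F i) = ⨆ i, Qd.inv (F i) := by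
  rw [iSup, Qd.inv_sSup, iSup_range]

lemma qdag_qdag (f : X → X → Q) : Qd.qdag (Qd.qdag f) = f :=
  funext fun x => funext fun y => Qd.inv_inv _

lemma qdag_qcomp (f g : X → X → Q) :
    Qd.qdag (Qd.qcomp f g) = Qd.qcomp (Qd.qdag g) (Qd.qdag f) := by
  funext x y
  show Qd.inv (⨆ u, Qd.mul (g y u) (f u x)) = ⨆ u, Qd.mul (Qd.qdag f x u) (Qd.qdag g u y)
  rw [Qd.inv_iSup]
  refine iSup_congr fun u => ?_
  show Qd.inv (Qd.mul (g y u) (f u x)) = Qd.mul (Qd.inv (f u x)) (Qd.inv (g y u))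
  rw [Qd.inv_mul, Qd.mul_comm]

lemma commutant_dag {A : Set (X → X → Q)} (hA : Qd.IsSubalg A) {h : X → X → Q}
    (hh : h ∈ Qd.commutant A) : Qd.qdag h ∈ Qd.commutant A := by
  intro a ha
  calc Qd.qcomp (Qd.qdag h) a
      = Qd.qcomp (Qd.qdag h) (Qd.qdag (Qd.qdag a)) := by rw [Qd.qdag_qdag]
    _ = Qd.qdag (Qd.qcomp (Qd.qdag a) h) := (Qd.qdag_qcomp _ _).symm
    _ = Qd.qdag (Qd.qcomp h (Qd.qdag a)) := by rw [hh _ (hA.dag_mem a ha)]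
    _ = Qd.qcomp (Qd.qdag (Qd.qdag a)) (Qd.qdag h) := Qd.qdag_qcomp _ _
    _ = Qd.qcomp a (Qd.qdag h) := by rw [Qd.qdag_qdag]

lemma iSup_single (F : X → Q) (x : X) (h : ∀ u, u ≠ x → F u = ⊥) :
    (⨆ u, F u) = F x := by
  refine le_antisymm (iSup_le fun u => ?_) (le_iSup F x)
  by_cases hu : u = x
  · subst hu; exact le_rfl
  · rw [h u hu]; exact bot_le

/-- The diagonal idempotent relation attached to a subset. -/
def qdiag (P : Set X) : X → X → Q := fun x y => if x = y ∧ x ∈ P then Qd.one else ⊥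

lemma qdiag_ne {P : Set X} {x y : X} (h : x ≠ y) : Qd.qdiag P x y = ⊥ := by
  rw [qdiag, if_neg]; rintro ⟨rfl, -⟩; exact h rfl

lemma qcomp_qdiag_right (P : Set X) (a : X → X → Q) :
    Qd.qcomp a (Qd.qdiag P) = fun x z => if x ∈ P then a x z else ⊥ := by
  funext x z
  show (⨆ u, Qd.mul (Qd.qdiag P x u) (a u z)) = _
  rw [iSup_single _ x (fun u hu => by
    rw [Qd.qdiag_ne (fun hc => hu hc.symm), Qd.bot_mul'])]
  by_cases hx : x ∈ P
  · rw [if_pos hx]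
    show Qd.mul (Qd.qdiag P x x) (a x z) = a x z
    rw [qdiag, if_pos ⟨rfl, hx⟩, Qd.one_mul]
  · rw [if_neg hx]
    show Qd.mul (Qd.qdiag P x x) (a x z) = ⊥
    rw [qdiag, if_neg (fun hc => hx hc.2), Qd.bot_mul']

lemma qcomp_qdiag_left (P : Set X) (a : X → X → Q) :
    Qd.qcomp (Qd.qdiag P) a = fun x z => if z ∈ P then a x z else ⊥ := by
  funext x z
  show (⨆ u, Qd.mul (a x u) (Qd.qdiag P u z)) = _
  rw [iSup_single _ z (fun u hu => by
    rw [Qd.qdiag_ne hu, Qd.mul_bot'])]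
  by_cases hz : z ∈ P
  · rw [if_pos hz]
    show Qd.mul (a x z) (Qd.qdiag P z z) = a x z
    rw [qdiag, if_pos ⟨rfl, hz⟩, Qd.mul_comm, Qd.one_mul]
  · rw [if_neg hz]
    show Qd.mul (a x z) (Qd.qdiag P z z) = ⊥
    rw [qdiag, if_neg (fun hc => hz hc.2), Qd.mul_bot']

lemma qdiag_idem (P : Set X) : Qd.qcomp (Qd.qdiag P) (Qd.qdiag P) = Qd.qdiag P := by
  rw [Qd.qcomp_qdiag_left]
  funext x z
  by_cases hz : z ∈ P
  · rw [if_pos hz]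
  · rw [if_neg hz, qdiag, if_neg]
    rintro ⟨rfl, hx⟩; exact hz hx

lemma qdiag_orth {P P' : Set X} (h : ∀ x, x ∈ P → x ∉ P') :
    Qd.qcomp (Qd.qdiag P') (Qd.qdiag P) = qzero := by
  rw [Qd.qcomp_qdiag_left]
  funext x z
  by_cases hz : z ∈ P'
  · rw [if_pos hz, qdiag, if_neg]
    · rfl
    · rintro ⟨rfl, hx⟩; exact h x hx hz
  · rw [if_neg hz]; rfl

lemma qdiag_sup (P P' : Set X) : Qd.qdiag P ⊔ Qd.qdiag P' = Qd.qdiag (P ∪ P') := by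
  funext x y
  show Qd.qdiag P x y ⊔ Qd.qdiag P' x y = Qd.qdiag (P ∪ P') x y
  by_cases hxy : x = y
  · subst hxy
    by_cases h1 : x ∈ P <;> by_cases h2 : x ∈ P' <;>
      simp [qdiag, h1, h2]
  · rw [Qd.qdiag_ne hxy, Qd.qdiag_ne hxy, Qd.qdiag_ne hxy, sup_idem]

lemma qdiag_univ : Qd.qdiag (Set.univ : Set X) = Qd.qid := by
  funext x y
  by_cases hxy : x = y
  · subst hxy; rw [qdiag, if_pos ⟨rfl, trivial⟩, qid, if_pos rfl]
  · rw [Qd.qdiag_ne hxy, qid, if_neg hxy]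

lemma qdiag_mem {A : Set (X → X → Q)} (hA : Qd.IsVN A) (P : Set X)
    (hP : ∀ h ∈ Qd.commutant A, ∀ x y : X, h x y ≠ ⊥ → (x ∈ P ↔ y ∈ P)) :
    Qd.qdiag P ∈ A := by
  rw [← hA.2]
  intro h hh
  rw [Qd.qcomp_qdiag_left, Qd.qcomp_qdiag_right]
  funext x z
  by_cases hxz : h x z = ⊥
  · simp only [hxz]
    split_ifs <;> rfl
  · have hiff := hP h hh x z hxz
    by_cases hx : x ∈ P
    · rw [if_pos (hiff.mp hx), if_pos hx]
    · rw [if_neg (fun hz => hx (hiff.mpr hz)), if_neg hx]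

/-- For a primitive subunital idempotent `e` of `A`, the
complement `{f ∈ A | f∘e = 0}` of the indecomposable component `e∘A` is a
prime k*-ideal of `A`. -/
theorem complement_of_component_is_prime_ideal
    (Qd : CommInvQuantale Q) (hZDF : Qd.ZDF) (hNT : Qd.NontrivialQ)
    (X : Type v) (A : Set (X → X → Q)) (hA : Qd.IsVN A)
    (e : X → X → Q) (he : Qd.IsPrimitive A e) :
    Qd.IsPrimeKStarIdeal A {f ∈ A | Qd.qcomp f e = qzero} := by
  classical
  obtain ⟨⟨⟨heA, heIdem⟩, q, ⟨hqA, hqIdem⟩, heq0, heqid⟩, hene, hnosplit⟩ := he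
  -- `e` vanishes off the diagonal
  have hediag : ∀ x y : X, x ≠ y → e x y = ⊥ := by
    intro x y hxy
    have h1 : e x y ⊔ q x y = Qd.qid x y := congrFun (congrFun heqid x) y
    rw [qid, if_neg hxy] at h1
    exact (sup_eq_bot_iff.mp h1).1
  -- diagonal dichotomy
  set S : Set X := {x | e x x = Qd.one} with hS
  have hdich : ∀ x : X, x ∈ S ∨ e x x = ⊥ := by
    intro x
    have h0 : Qd.mul (q x x) (e x x) = ⊥ := by
      have h1 : (⨆ u, Qd.mul (q x u) (e u x)) = (⊥ : Q) :=
        congrFun (congrFun heq0 x) x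
      exact iSup_eq_bot.mp h1 x
    rcases hZDF _ _ h0 with hq | he'
    · left
      have h1 : e x x ⊔ q x x = Qd.one := by
        have h2 : e x x ⊔ q x x = Qd.qid x x := congrFun (congrFun heqid x) x
        rwa [qid, if_pos rfl] at h2
      show e x x = Qd.one
      rw [← h1, hq, sup_bot_eq]
    · right; exact he'
  -- `e` is the diagonal of `S`
  have he_eq : e = Qd.qdiag S := by
    funext x y
    by_cases hxy : x = y
    · subst hxy
      rcases hdich x with h | h
      · rw [qdiag, if_pos ⟨rfl, h⟩]; exact h
      · rw [h, qdiag, if_neg]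
        rintro ⟨-, hx⟩
        exact hNT (hx ▸ h)
    · rw [hediag x y hxy, Qd.qdiag_ne hxy]
  -- membership in the purported ideal, concretely
  have hrow : ∀ a : X → X → Q, Qd.qcomp a e = qzero ↔ ∀ x z, x ∈ S → a x z = ⊥ := by
    intro a
    rw [he_eq, Qd.qcomp_qdiag_right]
    constructor
    · intro h x z hx
      have h1 := congrFun (congrFun h x) z
      rwa [if_pos hx] at h1
    · intro h
      funext x z
      by_cases hx : x ∈ S
      · rw [if_pos hx]; exact h x z hx
      · rw [if_neg hx]; rfl
  -- anything commuting with `e` is block diagonal w.r.t. `S`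
  have hblock : ∀ h : X → X → Q, Qd.qcomp h e = Qd.qcomp e h →
      ∀ x y : X, h x y ≠ ⊥ → (x ∈ S ↔ y ∈ S) := by
    intro h hcomm x y hxy
    rw [he_eq, Qd.qcomp_qdiag_right, Qd.qcomp_qdiag_left] at hcomm
    have h1 : (if x ∈ S then h x y else ⊥) = (if y ∈ S then h x y else ⊥) :=
      congrFun (congrFun hcomm x) y
    constructor
    · intro hx
      by_contra hy
      rw [if_pos hx, if_neg hy] at h1
      exact hxy h1
    · intro hy
      by_contra hx
      rw [if_neg hx, if_pos hy] at h1
      exact hxy h1.symm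
  have hAsub : A ⊆ Qd.commutant A := fun a ha g hg => hA.1.comp_comm a ha g hg
  -- edge propagation of nonzero rows along the commutant
  have hedge : ∀ a ∈ A, ∀ h ∈ Qd.commutant A, ∀ x y : X, h x y ≠ ⊥ →
      (∃ z, a y z ≠ ⊥) → ∃ z, a x z ≠ ⊥ := by
    rintro a ha h hh x y hxy ⟨z, hyz⟩
    have h1 : (⨆ u, Qd.mul (h x u) (a u z)) ≠ ⊥ := by
      intro h0
      rcases hZDF _ _ (iSup_eq_bot.mp h0 y) with h3 | h3
      · exact hxy h3
      · exact hyz h3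
    have hc : Qd.qcomp a h = Qd.qcomp h a := (hh a ha).symm
    have h4 : (⨆ u, Qd.mul (a x u) (h u z)) ≠ ⊥ := by
      have h5 : Qd.qcomp a h x z = Qd.qcomp h a x z := congrFun (congrFun hc x) z
      exact fun h0 => h1 (h5.trans h0)
    obtain ⟨u, hu⟩ : ∃ u, Qd.mul (a x u) (h u z) ≠ ⊥ := by
      by_contra hno
      push_neg at hno
      exact h4 (iSup_eq_bot.mpr hno)
    refine ⟨u, fun h0 => hu ?_⟩
    rw [h0]; exact Qd.bot_mul' _
  refine ⟨⟨fun f hf => hf.1, ?_, ?_, ?_⟩, ?_, ?_, ?_, ?_⟩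
  · -- zero_mem
    exact ⟨hA.1.zero_mem, (hrow qzero).mpr fun x z _ => rfl⟩
  · -- sup_mem
    intro a ha b hb
    refine ⟨hA.1.sup_mem a ha.1 b hb.1, (hrow _).mpr fun x z hx => ?_⟩
    show a x z ⊔ b x z = ⊥
    rw [(hrow a).mp ha.2 x z hx, (hrow b).mp hb.2 x z hx, sup_idem]
  · -- absorb
    intro f hf a ha
    refine ⟨hA.1.comp_mem f hf a ha.1, (hrow _).mpr fun x z hx => ?_⟩
    show (⨆ u, Qd.mul (a x u) (f u z)) = ⊥
    refine iSup_eq_bot.mpr fun u => ?_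
    rw [(hrow a).mp ha.2 x u hx]
    exact Qd.bot_mul' _
  · -- proper
    intro hJA
    have heJ : e ∈ {f ∈ A | Qd.qcomp f e = qzero} := by rw [hJA]; exact heA
    have h1 := heJ.2
    rw [heIdem] at h1
    exact hene h1
  · -- prime
    intro f hf g hg hfg
    by_contra hcon
    push_neg at hcon
    obtain ⟨hfJ, hgJ⟩ := hcon
    have hex : ∀ a : X → X → Q, a ∈ A → a ∉ {f ∈ A | Qd.qcomp f e = qzero} →
        ∃ x z, x ∈ S ∧ a x z ≠ ⊥ := by
      intro a ha hane
      by_contra hno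
      push_neg at hno
      refine hane ⟨ha, (hrow a).mpr fun x z hx => ?_⟩
      by_contra h0
      exact h0 (hno x z hx)
    obtain ⟨x0, z0, hx0S, hx0f⟩ := hex f hf hfJ
    obtain ⟨x1, w, hx1S, hx1g⟩ := hex g hg hgJ
    set F : Set X := {y | y ∈ S ∧ ∃ z, f y z ≠ ⊥} with hFdef
    have hFS : F ⊆ S := fun y hy => hy.1
    have hFcl : ∀ h ∈ Qd.commutant A, ∀ x y : X, h x y ≠ ⊥ → (x ∈ F ↔ y ∈ F) := by
      intro h hh x y hxy
      have hS' : x ∈ S ↔ y ∈ S := hblock h (hh e heA) x y hxy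
      constructor
      · rintro ⟨hxS, hxz⟩
        refine ⟨hS'.mp hxS, ?_⟩
        exact hedge f hf (Qd.qdag h) (Qd.commutant_dag hA.1 hh) y x
          (fun h0 => hxy ((Qd.inv_eq_bot).mp h0)) hxz
      · rintro ⟨hyS, hyz⟩
        exact ⟨hS'.mpr hyS, hedge f hf h hh x y hxy hyz⟩
    have hx0F : x0 ∈ F := ⟨hx0S, z0, hx0f⟩
    -- primitivity forces `S ⊆ F`
    have hSF : ∀ x, x ∈ S → x ∈ F := by
      by_contra hno
      push_neg at hno
      obtain ⟨x2, hx2S, hx2F⟩ := hno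
      apply hnosplit
      have hmemF : Qd.qdiag F ∈ A := Qd.qdiag_mem hA F hFcl
      have hmemFc : Qd.qdiag Fᶜ ∈ A := by
        refine Qd.qdiag_mem hA Fᶜ fun h hh x y hxy => ?_
        simp only [Set.mem_compl_iff]
        exact not_congr (hFcl h hh x y hxy)
      have hmemSF : Qd.qdiag (S \ F) ∈ A := by
        refine Qd.qdiag_mem hA (S \ F) fun h hh x y hxy => ?_
        simp only [Set.mem_diff]
        exact and_congr (hblock h (hh e heA) x y hxy) (not_congr (hFcl h hh x y hxy))
      have hmemSFc : Qd.qdiag (S \ F)ᶜ ∈ A := by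
        refine Qd.qdiag_mem hA (S \ F)ᶜ fun h hh x y hxy => ?_
        simp only [Set.mem_compl_iff, Set.mem_diff]
        exact not_congr (and_congr (hblock h (hh e heA) x y hxy)
          (not_congr (hFcl h hh x y hxy)))
      refine ⟨Qd.qdiag F, Qd.qdiag (S \ F),
        ⟨⟨hmemF, Qd.qdiag_idem F⟩, Qd.qdiag Fᶜ, ⟨hmemFc, Qd.qdiag_idem Fᶜ⟩,
          Qd.qdiag_orth (fun x hx hx' => hx hx'), ?_⟩, ?_,
        ⟨⟨hmemSF, Qd.qdiag_idem (S \ F)⟩, Qd.qdiag (S \ F)ᶜ,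
          ⟨hmemSFc, Qd.qdiag_idem (S \ F)ᶜ⟩,
          Qd.qdiag_orth (fun x hx hx' => hx hx'), ?_⟩, ?_, ?_, ?_⟩
      · rw [Qd.qdiag_sup, Set.union_compl_self, Qd.qdiag_univ]
      · intro h0
        have h1 : Qd.qdiag F x0 x0 = (⊥ : Q) := congrFun (congrFun h0 x0) x0
        rw [qdiag, if_pos ⟨rfl, hx0F⟩] at h1
        exact hNT h1
      · rw [Qd.qdiag_sup, Set.union_compl_self, Qd.qdiag_univ]
      · intro h0
        have h1 : Qd.qdiag (S \ F) x2 x2 = (⊥ : Q) := congrFun (congrFun h0 x2) x2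
        rw [qdiag, if_pos ⟨rfl, hx2S, hx2F⟩] at h1
        exact hNT h1
      · exact Qd.qdiag_orth (fun x hx hx' => hx.2 hx')
      · rw [Qd.qdiag_sup, Set.union_diff_cancel hFS, he_eq]
    -- derive the contradiction
    have hmain := (hrow (Qd.qcomp f g)).mp hfg.2
    have hwrow : ∀ z, f w z = ⊥ := by
      intro z
      have h1 : (⨆ u, Qd.mul (g x1 u) (f u z)) = (⊥ : Q) := hmain x1 z hx1S
      rcases hZDF _ _ (iSup_eq_bot.mp h1 w) with h3 | h3
      · exact absurd h3 hx1g
      · exact h3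
    have hwF : w ∈ F := (hFcl g (hAsub hg) x1 w hx1g).mp (hSF x1 hx1S)
    obtain ⟨-, z, hz⟩ := hwF
    exact hz (hwrow z)
  · -- k-ideal
    intro a ha b hb hab
    refine ⟨hb, (hrow b).mpr fun x z hx => ?_⟩
    have h1 : a x z ⊔ b x z = ⊥ := (hrow _).mp hab.2 x z hx
    exact (sup_eq_bot_iff.mp h1).2
  · -- dagger closed
    intro a ha
    refine ⟨hA.1.dag_mem a ha.1, (hrow _).mpr fun x z hx => ?_⟩
    have hz : a z x = ⊥ := by
      by_contra h0
      have hzS : z ∈ S := (hblock a (hA.1.comp_comm a ha.1 e heA) z x h0).mpr hx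
      exact h0 ((hrow a).mp ha.2 z x hzS)
    show Qd.inv (a z x) = ⊥
    rw [hz]
    exact Qd.inv_bot'

end CommInvQuantale
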